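/- Let x¹, x² : ℝ × ℝ → ℝ be smooth functions and u : ℝ → ℝ a function such that for all z ∈ (0,1) and t ≥ 0: ∂t x¹(z,t) = x²(z,t) and ∂t x²(z,t) = ∂z² x¹(z,t) + u(t), and for all t ≥ 0: x¹(0,t) = x¹(1,t) = 0. Then for every ε ∈ ℝ the functions x̄¹(z,t) = x¹(z,t) + ε·sin(2πz)·cos(2πt) and x̄²(z,t) = x²(z,t) − 2πε·sin(2πz)·sin(2πt) satisfy the same system with the same input u (i.e. ∂t x̄¹ = x̄², ∂t x̄² = ∂z² x̄¹ + u(t) on (0,1) × [0,∞)), the same Dirichlet boundary conditions x̄¹(0,t) = x̄¹(1,t) = 0, and produce the identical output x̄¹(1/2,t) = x¹(1/2,t) for all t ≥ 0; moreover, if ε ≠ 0 the initial conditions differ, i.e. there exists z ∈ [0,1] with x̄¹(z,0) ≠ x¹(z,0). -/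

import Mathlib

open Real

/-- Partial derivative with respect to the second (time) variable. -/
noncomputable def pt (f : ℝ × ℝ → ℝ) (z t : ℝ) : ℝ := deriv (fun s => f (z, s)) t

/-- Partial derivative with respect to the first (spatial) variable. -/
noncomputable def pz (f : ℝ × ℝ → ℝ) (z t : ℝ) : ℝ := deriv (fun w => f (w, t)) z

/-- Second partial derivative with respect to the first (spatial) variable. -/
noncomputable def pzz (f : ℝ × ℝ → ℝ) (z t : ℝ) : ℝ := pz (fun p => pz f p.1 p.2) z t

lemma hasDerivAt_sin2pi (w : ℝ) :
    HasDerivAt (fun x => Real.sin (2*π*x)) (2*π*Real.cos (2*π*w)) w := by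
  have h : HasDerivAt (fun x => Real.sin (2*π*x)) (Real.cos (2*π*w) * (2*π*1)) w :=
    (Real.hasDerivAt_sin (2*π*w)).comp w ((hasDerivAt_id w).const_mul (2*π))
  convert h using 1
  ring

lemma hasDerivAt_cos2pi (w : ℝ) :
    HasDerivAt (fun x => Real.cos (2*π*x)) (-(2*π*Real.sin (2*π*w))) w := by
  have h : HasDerivAt (fun x => Real.cos (2*π*x)) (-Real.sin (2*π*w) * (2*π*1)) w :=
    (Real.hasDerivAt_cos (2*π*w)).comp w ((hasDerivAt_id w).const_mul (2*π))
  convert h using 1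
  ring

lemma hasDerivAt_pt (f : ℝ × ℝ → ℝ) (hf : ContDiff ℝ (⊤ : ℕ∞) f) (z t : ℝ) :
    HasDerivAt (fun s => f (z, s)) (pt f z t) t := by
  have h : HasDerivAt (fun s => f (z, s)) (fderiv ℝ f (z, t) (0, 1)) t :=
    (hf.differentiable (by simp) (z,t)).hasFDerivAt.comp_hasDerivAt t
      (HasDerivAt.prodMk (hasDerivAt_const t z) (hasDerivAt_id t))
  unfold pt
  rw [h.deriv]
  exact h

lemma hasDerivAt_pz (f : ℝ × ℝ → ℝ) (hf : ContDiff ℝ (⊤ : ℕ∞) f) (z t : ℝ) :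
    HasDerivAt (fun w => f (w, t)) (pz f z t) z := by
  have h : HasDerivAt (fun w => f (w, t)) (fderiv ℝ f (z, t) (1, 0)) z :=
    (hf.differentiable (by simp) (z,t)).hasFDerivAt.comp_hasDerivAt z
      (HasDerivAt.prodMk (hasDerivAt_id z) (hasDerivAt_const z t))
  unfold pz
  rw [h.deriv]
  exact h

lemma pz_eq_fderiv (f : ℝ × ℝ → ℝ) (hf : ContDiff ℝ (⊤ : ℕ∞) f) (z t : ℝ) :
    pz f z t = fderiv ℝ f (z, t) (1, 0) := by
  have h : HasDerivAt (fun w => f (w, t)) (fderiv ℝ f (z, t) (1, 0)) z :=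
    (hf.differentiable (by simp) (z,t)).hasFDerivAt.comp_hasDerivAt z
      (HasDerivAt.prodMk (hasDerivAt_id z) (hasDerivAt_const z t))
  exact h.deriv

lemma pz_contDiff (f : ℝ × ℝ → ℝ) (hf : ContDiff ℝ (⊤ : ℕ∞) f) :
    ContDiff ℝ (⊤ : ℕ∞) (fun p : ℝ × ℝ => pz f p.1 p.2) := by
  have : (fun p : ℝ × ℝ => pz f p.1 p.2) = fun p => fderiv ℝ f p (1, 0) := by
    funext p
    rw [pz_eq_fderiv f hf]
  rw [this]
  exact (hf.fderiv_right (by simp)).clm_apply contDiff_const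

/-- Deforming a solution of the forced linear wave system with Dirichlet boundary conditions
by the symmetry group generated by (sin(2πz)cos(2πt), −2π sin(2πz) sin(2πt)) yields again a
solution with the same input, the same boundary conditions, and the same point output at
z₀ = 1/2, but (for ε ≠ 0) a different initial condition. -/
theorem statement1 (x1 x2 : ℝ × ℝ → ℝ) (u : ℝ → ℝ)
    (hx1 : ContDiff ℝ (⊤ : ℕ∞) x1) (hx2 : ContDiff ℝ (⊤ : ℕ∞) x2)
    (hpde1 : ∀ z ∈ Set.Ioo (0:ℝ) 1, ∀ t : ℝ, 0 ≤ t → pt x1 z t = x2 (z, t))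
    (hpde2 : ∀ z ∈ Set.Ioo (0:ℝ) 1, ∀ t : ℝ, 0 ≤ t → pt x2 z t = pzz x1 z t + u t)
    (hbc0 : ∀ t : ℝ, 0 ≤ t → x1 (0, t) = 0)
    (hbc1 : ∀ t : ℝ, 0 ≤ t → x1 (1, t) = 0)
    (ε : ℝ) :
    (∀ z ∈ Set.Ioo (0:ℝ) 1, ∀ t : ℝ, 0 ≤ t →
        pt (fun p => x1 p + ε * Real.sin (2*π*p.1) * Real.cos (2*π*p.2)) z t
          = x2 (z, t) - 2*π*ε*Real.sin (2*π*z) * Real.sin (2*π*t)) ∧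
    (∀ z ∈ Set.Ioo (0:ℝ) 1, ∀ t : ℝ, 0 ≤ t →
        pt (fun p => x2 p - 2*π*ε*Real.sin (2*π*p.1) * Real.sin (2*π*p.2)) z t
          = pzz (fun p => x1 p + ε * Real.sin (2*π*p.1) * Real.cos (2*π*p.2)) z t + u t) ∧
    (∀ t : ℝ, 0 ≤ t →
        x1 (0, t) + ε * Real.sin (2*π*(0:ℝ)) * Real.cos (2*π*t) = 0) ∧
    (∀ t : ℝ, 0 ≤ t →
        x1 (1, t) + ε * Real.sin (2*π*(1:ℝ)) * Real.cos (2*π*t) = 0) ∧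
    (∀ t : ℝ, 0 ≤ t →
        x1 (1/2, t) + ε * Real.sin (2*π*(1/2:ℝ)) * Real.cos (2*π*t) = x1 (1/2, t)) ∧
    (ε ≠ 0 → ∃ z ∈ Set.Icc (0:ℝ) 1,
        x1 (z, 0) + ε * Real.sin (2*π*z) * Real.cos (2*π*(0:ℝ)) ≠ x1 (z, 0)) := by
  -- key identity for the spatial derivative of the deformed x1
  have key : (fun p : ℝ × ℝ =>
        pz (fun q => x1 q + ε * Real.sin (2*π*q.1) * Real.cos (2*π*q.2)) p.1 p.2)
      = fun p : ℝ × ℝ =>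
        pz x1 p.1 p.2 + ε * (2*π*Real.cos (2*π*p.1)) * Real.cos (2*π*p.2) := by
    funext p
    have h1 := hasDerivAt_pz x1 hx1 p.1 p.2
    have h2 : HasDerivAt (fun w => ε * Real.sin (2*π*w) * Real.cos (2*π*p.2))
        (ε * (2*π*Real.cos (2*π*p.1)) * Real.cos (2*π*p.2)) p.1 :=
      ((hasDerivAt_sin2pi p.1).const_mul ε).mul_const _
    have h3 : HasDerivAt
        (fun w => (fun q => x1 q + ε * Real.sin (2*π*q.1) * Real.cos (2*π*q.2)) (w, p.2))
        (pz x1 p.1 p.2 + ε * (2*π*Real.cos (2*π*p.1)) * Real.cos (2*π*p.2)) p.1 := h1.add h2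
    unfold pz
    exact h3.deriv
  refine ⟨?_, ?_, ?_, ?_, ?_, ?_⟩
  · intro z hz t ht
    have h2 : HasDerivAt (fun s => ε * Real.sin (2*π*z) * Real.cos (2*π*s))
        (ε * Real.sin (2*π*z) * -(2*π*Real.sin (2*π*t))) t := by
      have := (hasDerivAt_cos2pi t).const_mul (ε * Real.sin (2*π*z))
      convert this using 1
    have h3 : HasDerivAt
        (fun s => (fun p => x1 p + ε * Real.sin (2*π*p.1) * Real.cos (2*π*p.2)) (z, s))
        (pt x1 z t + ε * Real.sin (2*π*z) * -(2*π*Real.sin (2*π*t))) t :=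
      (hasDerivAt_pt x1 hx1 z t).add h2
    have hL : pt (fun p => x1 p + ε * Real.sin (2*π*p.1) * Real.cos (2*π*p.2)) z t
        = pt x1 z t + ε * Real.sin (2*π*z) * -(2*π*Real.sin (2*π*t)) := by
      unfold pt; exact h3.deriv
    rw [hL, hpde1 z hz t ht]; ring
  · intro z hz t ht
    -- time derivative of deformed x2
    have h2 : HasDerivAt (fun s => 2*π*ε*Real.sin (2*π*z) * Real.sin (2*π*s))
        (2*π*ε*Real.sin (2*π*z) * (2*π*Real.cos (2*π*t))) t :=
      (hasDerivAt_sin2pi t).const_mul (2*π*ε*Real.sin (2*π*z))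
    have h3 : HasDerivAt
        (fun s => (fun p => x2 p - 2*π*ε*Real.sin (2*π*p.1) * Real.sin (2*π*p.2)) (z, s))
        (pt x2 z t - 2*π*ε*Real.sin (2*π*z) * (2*π*Real.cos (2*π*t))) t :=
      (hasDerivAt_pt x2 hx2 z t).sub h2
    have hL : pt (fun p => x2 p - 2*π*ε*Real.sin (2*π*p.1) * Real.sin (2*π*p.2)) z t
        = pt x2 z t - 2*π*ε*Real.sin (2*π*z) * (2*π*Real.cos (2*π*t)) := by
      unfold pt; exact h3.deriv
    -- second spatial derivative of deformed x1
    have hP : ContDiff ℝ (⊤ : ℕ∞) (fun p : ℝ × ℝ => pz x1 p.1 p.2) := pz_contDiff x1 hx1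
    have hA : HasDerivAt (fun w => (fun p : ℝ × ℝ => pz x1 p.1 p.2) (w, t))
        (pzz x1 z t) z := hasDerivAt_pz _ hP z t
    have hB : HasDerivAt (fun w => ε * (2*π*Real.cos (2*π*w)) * Real.cos (2*π*t))
        (ε * (2*π* -(2*π*Real.sin (2*π*z))) * Real.cos (2*π*t)) z := by
      have := (((hasDerivAt_cos2pi z).const_mul (2*π)).const_mul ε).mul_const
        (Real.cos (2*π*t))
      convert this using 1
    have hC : HasDerivAt
        (fun w => (fun p : ℝ × ℝ =>
            pz x1 p.1 p.2 + ε * (2*π*Real.cos (2*π*p.1)) * Real.cos (2*π*p.2)) (w, t))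
        (pzz x1 z t + ε * (2*π* -(2*π*Real.sin (2*π*z))) * Real.cos (2*π*t)) z := hA.add hB
    have hR : pzz (fun p => x1 p + ε * Real.sin (2*π*p.1) * Real.cos (2*π*p.2)) z t
        = pzz x1 z t + ε * (2*π* -(2*π*Real.sin (2*π*z))) * Real.cos (2*π*t) := by
      unfold pzz
      rw [key]
      unfold pz
      exact hC.deriv
    rw [hL, hR, hpde2 z hz t ht]; ring
  · intro t ht
    simp [hbc0 t ht]
  · intro t ht
    simp [hbc1 t ht, Real.sin_two_pi]
  · intro t ht
    have : 2*π*(1/2:ℝ) = π := by ring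
    rw [this, Real.sin_pi]
    ring
  · intro hε
    refine ⟨1/4, ⟨by norm_num, by norm_num⟩, ?_⟩
    have h1 : 2*π*(1/4:ℝ) = π/2 := by ring
    rw [h1, Real.sin_pi_div_two]
    simp [hε]
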